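/- The Gaussian width of C₂(x*,v*) ∩ S^{n+m-1} is at most √(η²(λ₁·∂f(x*)) + η²(λ₂·∂g(v*))), where η²(S) = E inf_{u∈S} ‖g − u‖₂² is the Gaussian squared distance. -/

import Mathlib

open MeasureTheory
open scoped RealInnerProductSpace Pointwise

/-- The standard Gaussian measure on `ℝ^k` (Euclidean space). -/
noncomputable def stdGaussian (k : ℕ) : Measure (EuclideanSpace ℝ (Fin k)) :=
  (Measure.pi fun _ : Fin k => ProbabilityTheory.gaussianReal 0 1).map
    (⇑(EuclideanSpace.equiv (Fin k) ℝ).symm)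

/-- Gaussian width of a subset of `ℝ^n × ℝ^m`. -/
noncomputable def gaussianWidth₂ {n m : ℕ}
    (C : Set (EuclideanSpace ℝ (Fin n) × EuclideanSpace ℝ (Fin m))) : ℝ :=
  ∫ p, (⨆ q : C,
      (⟪p.1, (q : EuclideanSpace ℝ (Fin n) × EuclideanSpace ℝ (Fin m)).1⟫ +
        ⟪p.2, (q : EuclideanSpace ℝ (Fin n) × EuclideanSpace ℝ (Fin m)).2⟫))
    ∂((stdGaussian n).prod (stdGaussian m))

/-- Gaussian squared distance `η²(S) = E inf_{u∈S} ‖g − u‖₂²`. -/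
noncomputable def gaussianSqDist {k : ℕ} (S : Set (EuclideanSpace ℝ (Fin k))) : ℝ :=
  ∫ x, (Metric.infDist x S) ^ 2 ∂(stdGaussian k)

/-- Subdifferential of `f` at `x`. -/
def subdiffE {k : ℕ} (f : EuclideanSpace ℝ (Fin k) → ℝ) (x : EuclideanSpace ℝ (Fin k)) :
    Set (EuclideanSpace ℝ (Fin k)) :=
  {u | ∀ d : EuclideanSpace ℝ (Fin k), f (x + d) ≥ f x + ⟪u, d⟫}

/-!
Every `(a, b) ∈ λ₁ • ∂f(x*) × λ₂ • ∂g(v*)` lies in the polar of the cone `C₂`, so for a unit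
vector `q ∈ C₂` we get `⟪p, q⟫ ≤ ⟪p - (a, b), q⟫ ≤ ‖p - (a, b)‖`. Taking `(a, b)` nearest to `p`
bounds the supremum in the Gaussian width by the distance from `p` to that product set, and
Jensen's inequality for `√` bounds the expected distance by the square root of the expected
squared distance, which splits into the two Gaussian squared distances.
-/

open Metric

section Polar

variable {E F : Type*} [NormedAddCommGroup E] [InnerProductSpace ℝ E]
  [NormedAddCommGroup F] [InnerProductSpace ℝ F]

lemma inner_add_inner_le_sqrt {x q : E} {y r : F} (hqr : ‖q‖ ^ 2 + ‖r‖ ^ 2 = 1) :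
    ⟪x, q⟫ + ⟪y, r⟫ ≤ √(‖x‖ ^ 2 + ‖y‖ ^ 2) := by
  refine (add_le_add (real_inner_le_norm x q) (real_inner_le_norm y r)).trans
    (Real.le_sqrt_of_sq_le ?_)
  nlinarith [sq_nonneg (‖x‖ * ‖r‖ - ‖y‖ * ‖q‖)]

lemma inner_add_inner_le_sqrt_dist {x a q : E} {y b r : F} (hpolar : ⟪q, a⟫ + ⟪r, b⟫ ≤ 0)
    (hqr : ‖q‖ ^ 2 + ‖r‖ ^ 2 = 1) :
    ⟪x, q⟫ + ⟪y, r⟫ ≤ √(dist x a ^ 2 + dist y b ^ 2) := by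
  calc ⟪x, q⟫ + ⟪y, r⟫ ≤ ⟪x - a, q⟫ + ⟪y - b, r⟫ := by
        rw [inner_sub_left, inner_sub_left, real_inner_comm q a, real_inner_comm r b]
        linarith
    _ ≤ √(dist x a ^ 2 + dist y b ^ 2) := by
        simpa only [dist_eq_norm] using inner_add_inner_le_sqrt hqr

lemma iSup_inner_le_sqrt_infDist_sq {A : Set E} {B : Set F} (hA : IsCompact A)
    (hAne : A.Nonempty) (hB : IsCompact B) (hBne : B.Nonempty) {C : Set (E × F)}
    (hC : ∀ q ∈ C, (∀ a ∈ A, ∀ b ∈ B, ⟪q.1, a⟫ + ⟪q.2, b⟫ ≤ 0) ∧ ‖q.1‖ ^ 2 + ‖q.2‖ ^ 2 = 1)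
    (p : E × F) :
    ⨆ q : C, (⟪p.1, (q : E × F).1⟫ + ⟪p.2, (q : E × F).2⟫) ≤
      √(infDist p.1 A ^ 2 + infDist p.2 B ^ 2) := by
  obtain ⟨a, ha, hpa⟩ := hA.exists_infDist_eq_dist hAne p.1
  obtain ⟨b, hb, hpb⟩ := hB.exists_infDist_eq_dist hBne p.2
  rw [hpa, hpb]
  rcases isEmpty_or_nonempty C with hCe | hCne
  · rw [Real.iSup_of_isEmpty]
    positivity
  · refine ciSup_le fun q => ?_
    obtain ⟨hpolar, hq⟩ := hC q q.2
    exact inner_add_inner_le_sqrt_dist (hpolar a ha b hb) hq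

lemma inner_add_inner_nonpos_of_mem_smul {U : Set E} {V : Set F} {l₁ l₂ : ℝ} (hl₁ : 0 < l₁)
    {q : E × F} (hq : ∀ u ∈ U, ∀ s ∈ V, ⟪q.1, u⟫ + (l₂ / l₁) * ⟪q.2, s⟫ ≤ 0) :
    ∀ a ∈ l₁ • U, ∀ b ∈ l₂ • V, ⟪q.1, a⟫ + ⟪q.2, b⟫ ≤ 0 := by
  rintro _ ⟨u, hu, rfl⟩ _ ⟨s, hs, rfl⟩
  have h := mul_nonpos_of_nonneg_of_nonpos hl₁.le (hq u hu s hs)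
  rw [real_inner_smul_right, real_inner_smul_right]
  rwa [mul_add, ← mul_assoc, mul_div_cancel₀ _ hl₁.ne'] at h

end Polar

lemma integrable_infDist_sq {E : Type*} [NormedAddCommGroup E] [MeasurableSpace E]
    [OpensMeasurableSpace E] {μ : Measure E} [IsFiniteMeasure μ] (hμ : MemLp id 2 μ)
    {S : Set E} (hS : S.Nonempty) : Integrable (fun x => infDist x S ^ 2) μ := by
  obtain ⟨u, hu⟩ := hS
  refine MemLp.integrable_sq ((hμ.sub (memLp_const u)).of_le
    (continuous_infDist_pt S).aestronglyMeasurable (Filter.Eventually.of_forall fun x => ?_))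
  rw [Real.norm_of_nonneg infDist_nonneg]
  simpa [dist_eq_norm] using infDist_le_dist_of_mem hu

/-- A non-integrable `F` has integral `0`, so no integrability of `F` is needed. -/
lemma integral_le_sqrt_integral_of_le_sqrt {α : Type*} [MeasurableSpace α] {μ : Measure α}
    [IsProbabilityMeasure μ] {F D : α → ℝ} (hD : Integrable D μ) (hD0 : 0 ≤ D)
    (hF : ∀ x, F x ≤ √(D x)) : ∫ x, F x ∂μ ≤ √(∫ x, D x ∂μ) := by
  have hsqrt : Integrable (fun x => √(D x)) μ := by
    refine (memLp_two_iff_integrable_sq ?_).2 ?_ |>.integrable one_le_two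
    · exact Real.continuous_sqrt.comp_aestronglyMeasurable hD.1
    · exact hD.congr (Filter.Eventually.of_forall fun x => (Real.sq_sqrt (hD0 x)).symm)
  by_cases hFi : Integrable F μ
  · calc ∫ x, F x ∂μ ≤ ∫ x, √(D x) ∂μ := integral_mono hFi hsqrt hF
      _ ≤ √(∫ x, D x ∂μ) :=
        Real.strictConcaveOn_sqrt.concaveOn.le_map_integral Real.continuous_sqrt.continuousOn
          isClosed_Ici (Filter.Eventually.of_forall hD0) hD hsqrt
  · rw [integral_undef hFi]
    positivity

lemma stdGaussian_eq_stdGaussian_euclideanSpace (k : ℕ) :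
    stdGaussian k = ProbabilityTheory.stdGaussian (EuclideanSpace ℝ (Fin k)) :=
  ProbabilityTheory.map_pi_eq_stdGaussian

instance isGaussian_stdGaussian (k : ℕ) : ProbabilityTheory.IsGaussian (stdGaussian k) := by
  rw [stdGaussian_eq_stdGaussian_euclideanSpace]
  infer_instance

lemma integrable_infDist_sq_stdGaussian {k : ℕ} {S : Set (EuclideanSpace ℝ (Fin k))}
    (hS : S.Nonempty) : Integrable (fun x => infDist x S ^ 2) (stdGaussian k) :=
  integrable_infDist_sq ProbabilityTheory.IsGaussian.memLp_two_id hS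

theorem gaussianWidth_cone_two_bound_general {n m : ℕ}
    (f : EuclideanSpace ℝ (Fin n) → ℝ) (g : EuclideanSpace ℝ (Fin m) → ℝ)
    (xs : EuclideanSpace ℝ (Fin n)) (vs : EuclideanSpace ℝ (Fin m))
    (hfne : (subdiffE f xs).Nonempty) (hfc : IsCompact (subdiffE f xs))
    (hgne : (subdiffE g vs).Nonempty) (hgc : IsCompact (subdiffE g vs))
    (l₁ l₂ : ℝ) (hl₁ : 0 < l₁) :
    gaussianWidth₂
        ({p : EuclideanSpace ℝ (Fin n) × EuclideanSpace ℝ (Fin m) |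
            ∀ u ∈ subdiffE f xs, ∀ s ∈ subdiffE g vs,
              ⟪p.1, u⟫ + (l₂ / l₁) * ⟪p.2, s⟫ ≤ 0} ∩
          {p | ‖p.1‖ ^ 2 + ‖p.2‖ ^ 2 = 1}) ≤
      Real.sqrt (gaussianSqDist (l₁ • subdiffE f xs) + gaussianSqDist (l₂ • subdiffE g vs)) := by
  set A := l₁ • subdiffE f xs
  set B := l₂ • subdiffE g vs
  have hA := integrable_infDist_sq_stdGaussian (hfne.smul_set (a := l₁))
  have hB := integrable_infDist_sq_stdGaussian (hgne.smul_set (a := l₂))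
  calc gaussianWidth₂ _
      ≤ √(∫ p, (infDist p.1 A ^ 2 + infDist p.2 B ^ 2) ∂(stdGaussian n).prod (stdGaussian m)) :=
        integral_le_sqrt_integral_of_le_sqrt ((hA.comp_fst _).add (hB.comp_snd _))
          (fun p => by positivity)
          (iSup_inner_le_sqrt_infDist_sq (hfc.smul l₁) hfne.smul_set (hgc.smul l₂)
            hgne.smul_set fun q hq => ⟨inner_add_inner_nonpos_of_mem_smul hl₁ hq.1, hq.2⟩)
    _ = √(gaussianSqDist A + gaussianSqDist B) := by
        rw [integral_add (hA.comp_fst _) (hB.comp_snd _),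
          integral_fun_fst (fun x => infDist x A ^ 2), integral_fun_snd (fun y => infDist y B ^ 2)]
        simp [gaussianSqDist]

/-- the Gaussian width of `C₂(x*,v*) ∩ S^{n+m-1}` is at most
`√(η²(λ₁·∂f(x*)) + η²(λ₂·∂g(v*)))`. -/
theorem gaussianWidth_cone_two_bound {n m : ℕ}
    (f : EuclideanSpace ℝ (Fin n) → ℝ) (g : EuclideanSpace ℝ (Fin m) → ℝ)
    (hf : ConvexOn ℝ Set.univ f) (hg : ConvexOn ℝ Set.univ g)
    (xs : EuclideanSpace ℝ (Fin n)) (vs : EuclideanSpace ℝ (Fin m))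
    (hfne : (subdiffE f xs).Nonempty) (hfc : IsCompact (subdiffE f xs))
    (hgne : (subdiffE g vs).Nonempty) (hgc : IsCompact (subdiffE g vs))
    (l₁ l₂ : ℝ) (hl₁ : 0 < l₁) (hl₂ : 0 < l₂) :
    gaussianWidth₂
        ({p : EuclideanSpace ℝ (Fin n) × EuclideanSpace ℝ (Fin m) |
            ∀ u ∈ subdiffE f xs, ∀ s ∈ subdiffE g vs,
              ⟪p.1, u⟫ + (l₂ / l₁) * ⟪p.2, s⟫ ≤ 0} ∩
          {p | ‖p.1‖ ^ 2 + ‖p.2‖ ^ 2 = 1}) ≤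
      Real.sqrt (gaussianSqDist (l₁ • subdiffE f xs) + gaussianSqDist (l₂ • subdiffE g vs)) :=
  gaussianWidth_cone_two_bound_general f g xs vs hfne hfc hgne hgc l₁ l₂ hl₁
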